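/- For any two maximum circulations x' and x'' in a vote graph, the partial orders induced by the residual acyclic graphs A(q−x') and A(q−x'') are non-conflicting: there is no pair i, j with a directed path from i to j in A(q−x') and a directed path from j to i in A(q−x''). -/

import Mathlib

/-!
The midpoint `z` of two maximum circulations `x'`, `x''` is again a maximum circulation, and
every arc left unsaturated by `x'` or by `x''` is left unsaturated by `z`. A conflict between the
two residual orders would therefore close a cycle in the residual graph of `z`; but a maximum
circulation has no residual cycle, since pushing a small amount of flow around it would increase
the total flow.
-/

open Finset

/-- `x` is a circulation on the arc set `A` with capacities `q`. -/
def IsCirculation {V : Type*} [Fintype V] [DecidableEq V]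
    (A : Finset (V × V)) (q x : V × V → ℝ) : Prop :=
  (∀ a ∈ A, 0 ≤ x a ∧ x a ≤ q a) ∧ (∀ a, a ∉ A → x a = 0) ∧
  ∀ i : V, ∑ a ∈ A.filter (fun a => a.1 = i), x a
         = ∑ a ∈ A.filter (fun a => a.2 = i), x a

/-- `x` is a maximum circulation: it maximizes total flow. -/
def IsMaxCirculation {V : Type*} [Fintype V] [DecidableEq V]
    (A : Finset (V × V)) (q x : V × V → ℝ) : Prop :=
  IsCirculation A q x ∧
  ∀ y, IsCirculation A q y → ∑ a ∈ A, y a ≤ ∑ a ∈ A, x a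

/-- The residual (remaining-votes) relation: arcs of `A` not saturated by `x`. -/
def residRel {V : Type*} [Fintype V] [DecidableEq V]
    (A : Finset (V × V)) (q x : V × V → ℝ) (i j : V) : Prop :=
  (i, j) ∈ A ∧ x (i, j) < q (i, j)

/-- A relation is acyclic if it has no directed cycle. -/
def Acyclic {V : Type*} (r : V → V → Prop) : Prop :=
  ∀ i, ¬ Relation.TransGen r i i

/-- The set of arcs of `A` left unsaturated by `x`. -/
noncomputable def unsat {V : Type*} [Fintype V] [DecidableEq V]
    (A : Finset (V × V)) (q x : V × V → ℝ) : Finset (V × V) :=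
  A.filter (fun a => x a < q a)

/-- An arc is strong if some maximum circulation leaves it unsaturated. -/
def IsStrongArc {V : Type*} [Fintype V] [DecidableEq V]
    (A : Finset (V × V)) (q : V × V → ℝ) (a : V × V) : Prop :=
  a ∈ A ∧ ∃ x, IsMaxCirculation A q x ∧ x a < q a

/-- A strong maximum circulation: a maximum circulation leaving as many arcs
unsaturated as possible. -/
def IsStrongMaxCirculation {V : Type*} [Fintype V] [DecidableEq V]
    (A : Finset (V × V)) (q x : V × V → ℝ) : Prop :=
  IsMaxCirculation A q x ∧
  ∀ y, IsMaxCirculation A q y → (unsat A q y).card ≤ (unsat A q x).card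

/-- Strong complementary slackness between a circulation `x` and node
potentials `y`. -/
def StrongCS {V : Type*} [Fintype V] [DecidableEq V]
    (A : Finset (V × V)) (q x : V × V → ℝ) (y : V → ℝ) : Prop :=
  ∀ a ∈ A,
    (x a = 0 → 1 - y a.1 + y a.2 ≤ 0) ∧
    (0 < x a → x a < q a → 1 - y a.1 + y a.2 = 0) ∧
    (x a = q a → 0 < 1 - y a.1 + y a.2)

/-- The vote graph is Eulerian: capacity balance holds at every node. -/
def Eulerian {V : Type*} [Fintype V] [DecidableEq V]
    (A : Finset (V × V)) (q : V × V → ℝ) : Prop :=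
  ∀ i : V, ∑ a ∈ A.filter (fun a => a.1 = i), q a
         = ∑ a ∈ A.filter (fun a => a.2 = i), q a

open Relation Filter Topology

lemma exists_pos_forall_add_mul_le {ι : Type*} {s : Finset ι} {x q m : ι → ℝ}
    (hx : ∀ a ∈ s, x a ≤ q a)
    (hm : ∀ a ∈ s, m a ≠ 0 → x a < q a) : ∃ ε > 0, ∀ a ∈ s, x a + ε * m a ≤ q a := by
  have hnear : ∀ a ∈ s, ∀ᶠ ε in 𝓝 (0 : ℝ), x a + ε * m a ≤ q a := by
    intro a ha
    by_cases hma : m a = 0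
    · simp [hma, hx a ha]
    have hcont : Tendsto (fun ε : ℝ => x a + ε * m a) (𝓝 0) (𝓝 (x a)) := by
      simpa using ((tendsto_id (x := 𝓝 (0 : ℝ))).mul_const (m a)).const_add (x a)
    exact (hcont.eventually_lt_const (hm a ha hma)).mono fun _ => le_of_lt
  obtain ⟨ε, hε, hpos⟩ :=
    (((eventually_all_finset s).2 hnear).filter_mono nhdsWithin_le_nhds).and
      (self_mem_nhdsWithin : ∀ᶠ ε in 𝓝[>] (0 : ℝ), 0 < ε) |>.exists
  exact ⟨ε, hpos, hε⟩

section NetOutflow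

variable {V : Type*} [DecidableEq V] {A : Finset (V × V)} {m m' : V × V → ℝ}

def netOutflow (A : Finset (V × V)) (m : V × V → ℝ) (v : V) : ℝ :=
  ∑ a ∈ A.filter (fun a => a.1 = v), m a - ∑ a ∈ A.filter (fun a => a.2 = v), m a

lemma netOutflow_add : netOutflow A (m + m') = netOutflow A m + netOutflow A m' := by
  ext v
  simp only [netOutflow, Pi.add_apply, sum_add_distrib]
  ring

lemma netOutflow_smul (c : ℝ) : netOutflow A (c • m) = c • netOutflow A m := by
  ext v
  simp only [netOutflow, Pi.smul_apply, smul_eq_mul, ← mul_sum]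
  ring

lemma netOutflow_single {b c : V} (h : (b, c) ∈ A) :
    netOutflow A (Pi.single (b, c) 1) = Pi.single b 1 - Pi.single c 1 := by
  ext v
  simp [netOutflow, h, Pi.single_apply, eq_comm]

end NetOutflow

section Circulation

variable {V : Type*} [Fintype V] [DecidableEq V] {A : Finset (V × V)} {q x y m : V × V → ℝ}

lemma isCirculation_iff :
    IsCirculation A q x ↔ (∀ a ∈ A, 0 ≤ x a ∧ x a ≤ q a) ∧ (∀ a ∉ A, x a = 0) ∧
      netOutflow A x = 0 := by
  simp only [IsCirculation, funext_iff, netOutflow, Pi.zero_apply, sub_eq_zero]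

lemma convex_setOf_isCirculation : Convex ℝ {x | IsCirculation A q x} := by
  intro x hx y hy s t hs ht hst
  rw [Set.mem_ofPred_eq, isCirculation_iff] at hx hy ⊢
  refine ⟨fun a ha => ?_, fun a ha => ?_, ?_⟩
  · obtain ⟨hx0, hxq⟩ := hx.1 a ha
    obtain ⟨hy0, hyq⟩ := hy.1 a ha
    simp only [Pi.add_apply, Pi.smul_apply, smul_eq_mul]
    constructor <;> nlinarith
  · simp [hx.2.1 a ha, hy.2.1 a ha]
  · rw [netOutflow_add, netOutflow_smul, netOutflow_smul, hx.2.2, hy.2.2]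
    simp

lemma IsCirculation.add_smul (hx : IsCirculation A q x) (hm0 : 0 ≤ m)
    (hmA : ∀ a ∉ A, m a = 0) (hm : netOutflow A m = 0) {ε : ℝ} (hε : 0 ≤ ε)
    (hcap : ∀ a ∈ A, x a + ε * m a ≤ q a) : IsCirculation A q (x + ε • m) := by
  rw [isCirculation_iff] at *
  refine ⟨fun a ha => ⟨?_, hcap a ha⟩, fun a ha => ?_, ?_⟩
  · have := (hx.1 a ha).1
    have := mul_nonneg hε (hm0 a)
    simp only [Pi.add_apply, Pi.smul_apply, smul_eq_mul]
    linarith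
  · simp [hx.2.1 a ha, hmA a ha]
  · rw [netOutflow_add, netOutflow_smul, hx.2.2, hm]
    simp

lemma IsMaxCirculation.sum_eq (hx : IsMaxCirculation A q x) (hy : IsMaxCirculation A q y) :
    ∑ a ∈ A, x a = ∑ a ∈ A, y a :=
  le_antisymm (hy.2 x hx.1) (hx.2 y hy.1)

lemma convex_setOf_isMaxCirculation : Convex ℝ {x | IsMaxCirculation A q x} := by
  intro x hx y hy s t hs ht hst
  refine ⟨convex_setOf_isCirculation hx.1 hy.1 hs ht hst, fun w hw => ?_⟩
  calc ∑ a ∈ A, w a ≤ ∑ a ∈ A, x a := hx.2 w hw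
    _ = ∑ a ∈ A, (s • x + t • y) a := by
      simp only [Pi.add_apply, Pi.smul_apply, smul_eq_mul, sum_add_distrib, ← mul_sum,
        ← hx.sum_eq hy, ← add_mul, hst, one_mul]

lemma residRel.smul_add_smul {i j : V} (h : residRel A q x i j) (hy : ∀ a ∈ A, y a ≤ q a)
    {s t : ℝ} (hs : 0 < s) (ht : 0 ≤ t) (hst : s + t = 1) :
    residRel A q (s • x + t • y) i j := by
  refine ⟨h.1, ?_⟩
  have hx := mul_lt_mul_of_pos_left h.2 hs
  have hy := mul_le_mul_of_nonneg_left (hy _ h.1) ht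
  simp only [Pi.add_apply, Pi.smul_apply, smul_eq_mul]
  linear_combination hx + hy + q (i, j) * hst

lemma exists_flow_of_transGen_residRel {i j : V} (h : TransGen (residRel A q x) i j) :
    ∃ m : V × V → ℝ, 0 ≤ m ∧ (∀ a ∉ unsat A q x, m a = 0) ∧
      netOutflow A m = Pi.single i 1 - Pi.single j 1 ∧ 1 ≤ ∑ a ∈ A, m a := by
  induction h with
  | @single c hic =>
    refine ⟨Pi.single (i, c) 1, Pi.single_nonneg.2 zero_le_one, fun a ha => ?_,
      netOutflow_single hic.1, by simp [sum_pi_single', hic.1]⟩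
    rw [Pi.single_apply, if_neg]
    rintro rfl
    exact ha (mem_filter.2 hic)
  | @tail b c _ hbc ih =>
    obtain ⟨m, hm0, hmsupp, hmnet, hmsum⟩ := ih
    refine ⟨m + Pi.single (b, c) 1, add_nonneg hm0 (Pi.single_nonneg.2 zero_le_one),
      fun a ha => ?_, ?_, ?_⟩
    · rw [Pi.add_apply, hmsupp a ha, Pi.single_apply, if_neg, add_zero]
      rintro rfl
      exact ha (mem_filter.2 hbc)
    · rw [netOutflow_add, hmnet, netOutflow_single hbc.1]
      abel
    · simp only [Pi.add_apply, sum_add_distrib, sum_pi_single', if_pos hbc.1]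
      linarith

theorem IsMaxCirculation.acyclic_residRel (hx : IsMaxCirculation A q x) :
    Acyclic (residRel A q x) := by
  intro i hcycle
  obtain ⟨m, hm0, hmsupp, hmnet, hmsum⟩ := exists_flow_of_transGen_residRel hcycle
  rw [sub_self] at hmnet
  have hmA : ∀ a ∉ A, m a = 0 := fun a ha => hmsupp a fun h => ha (mem_filter.1 h).1
  obtain ⟨ε, hε, hcap⟩ := exists_pos_forall_add_mul_le (fun a ha => (hx.1.1 a ha).2)
    fun a ha hma => (mem_filter.1 (not_not.1 (mt (hmsupp a) hma))).2
  have hle := hx.2 _ (hx.1.add_smul hm0 hmA hmnet hε.le hcap)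
  simp only [Pi.add_apply, Pi.smul_apply, smul_eq_mul, sum_add_distrib, ← mul_sum] at hle
  nlinarith

end Circulation

theorem max_circulations_non_conflicting_general
    {V : Type*} [Fintype V] [DecidableEq V]
    (A : Finset (V × V)) (q : V × V → ℝ)
    (x' x'' : V × V → ℝ)
    (hx' : IsMaxCirculation A q x') (hx'' : IsMaxCirculation A q x'') :
    ¬ ∃ i j : V, Relation.TransGen (residRel A q x') i j ∧
                 Relation.TransGen (residRel A q x'') j i := by
  rintro ⟨i, j, hij, hji⟩
  have hhalf : (0 : ℝ) < 1 / 2 := by norm_num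
  set z := (1 / 2 : ℝ) • x' + (1 / 2 : ℝ) • x'' with hz
  have hzmax : IsMaxCirculation A q z :=
    convex_setOf_isMaxCirculation hx' hx'' hhalf.le hhalf.le (by norm_num)
  have hij' : TransGen (residRel A q z) i j := TransGen.mono (fun _ _ h =>
    h.smul_add_smul (fun a ha => (hx''.1.1 a ha).2) hhalf hhalf.le (by norm_num)) _ _ hij
  have hji' : TransGen (residRel A q z) j i := TransGen.mono (fun _ _ h => by
    rw [hz, add_comm]
    exact h.smul_add_smul (fun a ha => (hx'.1.1 a ha).2) hhalf hhalf.le (by norm_num)) _ _ hji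
  exact hzmax.acyclic_residRel i (hij'.trans hji')

/-- the partial orders induced by removing any two maximum
circulations are non-conflicting. -/
theorem max_circulations_non_conflicting
    {V : Type*} [Fintype V] [DecidableEq V]
    (A : Finset (V × V)) (q : V × V → ℝ)
    (hqpos : ∀ a ∈ A, 0 < q a) (x' x'' : V × V → ℝ)
    (hx' : IsMaxCirculation A q x') (hx'' : IsMaxCirculation A q x'') :
    ¬ ∃ i j : V, Relation.TransGen (residRel A q x') i j ∧
                 Relation.TransGen (residRel A q x'') j i :=
  max_circulations_non_conflicting_general A q x' x'' hx' hx''
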